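/- Let F : ℝ³ → ℝ be differentiable with F(0) = 0 and |f(u)| = o(|u|) as u → 0, where f := ∇F. If F satisfies conditions (F9) and (**), then F satisfies condition (*). -/

import Mathlib

/-!
At `u = 0`, (F9) reads `F v ≥ F 0 + t⟨f(0), v⟩` for all `t ≥ 0`, which forces
`f(0) = 0` and makes `0` the strict minimum of `F`; at `t = 0, v = 0` it gives
`⟨f(u), u⟩ > 2(F u - F 0) > 0` for `u ≠ 0`. Condition (*) is then (F9) at
`t = ⟨f(u), v⟩ / ⟨f(u), u⟩` with `v - t u`, which is orthogonal to `f(u)`, in place of `v`.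
-/

open RealInnerProductSpace

noncomputable section

/-- Condition (F9) for a differentiable `F : ℝ³ → ℝ` with gradient `f = ∇F`:
`((t²−1)/2)⟨f(u),u⟩ + t⟨f(u),v⟩ + F(u) − F(tu+v) ≤ 0` for all `t ≥ 0`, `u, v ∈ ℝ³`,
with strict inequality whenever `u ≠ tu + v`. -/
def CondF9 (F : EuclideanSpace ℝ (Fin 3) → ℝ) : Prop :=
  ∀ t : ℝ, 0 ≤ t → ∀ u v : EuclideanSpace ℝ (Fin 3),
    (t ^ 2 - 1) / 2 * ⟪gradient F u, u⟫ + t * ⟪gradient F u, v⟫ + F u - F (t • u + v) ≤ 0 ∧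
    (u ≠ t • u + v →
      (t ^ 2 - 1) / 2 * ⟪gradient F u, u⟫ + t * ⟪gradient F u, v⟫ + F u - F (t • u + v) < 0)

/-- Condition (*): whenever `⟨f(u),v⟩ = ⟨f(v),u⟩ > 0` one has
`F(u) − F(v) ≤ (⟨f(u),u⟩² − ⟨f(u),v⟩²)/(2⟨f(u),u⟩)`, with strict inequality if in
addition `F(u) ≠ F(v)`. -/
def CondStar (F : EuclideanSpace ℝ (Fin 3) → ℝ) : Prop :=
  ∀ u v : EuclideanSpace ℝ (Fin 3),
    ⟪gradient F u, v⟫ = ⟪gradient F v, u⟫ → 0 < ⟪gradient F u, v⟫ →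
      (F u - F v ≤ (⟪gradient F u, u⟫ ^ 2 - ⟪gradient F u, v⟫ ^ 2)
          / (2 * ⟪gradient F u, u⟫) ∧
        (F u ≠ F v →
          F u - F v < (⟪gradient F u, u⟫ ^ 2 - ⟪gradient F u, v⟫ ^ 2)
            / (2 * ⟪gradient F u, u⟫)))

/-- Condition (**): `F` is strictly convex and `⟨f(u),u⟩ > 2F(u)` for all `u ≠ 0`. -/
def CondStarStar (F : EuclideanSpace ℝ (Fin 3) → ℝ) : Prop :=
  StrictConvexOn ℝ Set.univ F ∧
    ∀ u : EuclideanSpace ℝ (Fin 3), u ≠ 0 → 2 * F u < ⟪gradient F u, u⟫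

/-- `|f(u)| = o(|u|)` as `u → 0`, for `f = ∇F`. -/
def GradLittleO (F : EuclideanSpace ℝ (Fin 3) → ℝ) : Prop :=
  (fun u => ‖gradient F u‖) =o[nhds (0 : EuclideanSpace ℝ (Fin 3))]
    fun u : EuclideanSpace ℝ (Fin 3) => ‖u‖

section F9

variable {E : Type*} [NormedAddCommGroup E] [InnerProductSpace ℝ E]

def SatisfiesF9 (F : E → ℝ) (f : E → E) : Prop :=
  ∀ t : ℝ, 0 ≤ t → ∀ u v : E,
    (t ^ 2 - 1) / 2 * ⟪f u, u⟫ + t * ⟪f u, v⟫ + F u - F (t • u + v) ≤ 0 ∧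
    (u ≠ t • u + v → (t ^ 2 - 1) / 2 * ⟪f u, u⟫ + t * ⟪f u, v⟫ + F u - F (t • u + v) < 0)

theorem condF9_iff_satisfiesF9 {F : EuclideanSpace ℝ (Fin 3) → ℝ} :
    CondF9 F ↔ SatisfiesF9 F (gradient F) :=
  Iff.rfl

theorem nonpos_of_forall_nonneg_mul_le {a b : ℝ} (h : ∀ t : ℝ, 0 ≤ t → t * a ≤ b) : a ≤ 0 := by
  by_contra! ha
  have hb : 0 ≤ b := by simpa using h 0 le_rfl
  have hlarge := h (b / a + 1) (by positivity)
  rw [add_mul, div_mul_cancel₀ b ha.ne', one_mul] at hlarge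
  linarith

namespace SatisfiesF9

variable {F : E → ℝ} {f : E → E}

theorem apply_zero (h : SatisfiesF9 F f) : f 0 = 0 := by
  have hray : ∀ t : ℝ, 0 ≤ t → t * ⟪f 0, f 0⟫ ≤ F (f 0) - F 0 := fun t ht => by
    have := (h t ht 0 (f 0)).1
    simp only [inner_zero_right, mul_zero, smul_zero, zero_add] at this
    linarith
  exact real_inner_self_nonpos.1 (nonpos_of_forall_nonneg_mul_le hray)

theorem apply_zero_lt (h : SatisfiesF9 F f) {w : E} (hw : w ≠ 0) : F 0 < F w := by
  have := (h 1 zero_le_one 0 w).2 (by simpa using hw.symm)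
  simp only [h.apply_zero, inner_zero_left, mul_zero, smul_zero, zero_add] at this
  linarith

theorem two_mul_sub_lt_inner (h : SatisfiesF9 F f) {u : E} (hu : u ≠ 0) :
    2 * (F u - F 0) < ⟪f u, u⟫ := by
  have := (h 0 le_rfl u 0).2 (by simpa using hu)
  simp only [inner_zero_right, zero_smul, add_zero, mul_zero] at this
  linarith

theorem inner_apply_self_pos (h : SatisfiesF9 F f) {u : E} (hu : u ≠ 0) : 0 < ⟪f u, u⟫ := by
  linarith [h.two_mul_sub_lt_inner hu, h.apply_zero_lt hu]

theorem sub_le_of_inner_pos (h : SatisfiesF9 F f) {u v : E} (hB : 0 < ⟪f u, v⟫) :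
    F u - F v ≤ (⟪f u, u⟫ ^ 2 - ⟪f u, v⟫ ^ 2) / (2 * ⟪f u, u⟫) ∧
      (u ≠ v → F u - F v < (⟪f u, u⟫ ^ 2 - ⟪f u, v⟫ ^ 2) / (2 * ⟪f u, u⟫)) := by
  have hu : u ≠ 0 := by
    rintro rfl
    simp [h.apply_zero] at hB
  have hA := h.inner_apply_self_pos hu
  set A := ⟪f u, u⟫
  set B := ⟪f u, v⟫
  set t := B / A
  have hlhs : (t ^ 2 - 1) / 2 * A + t * ⟪f u, v - t • u⟫ + F u - F (t • u + (v - t • u)) =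
      F u - F v - (A ^ 2 - B ^ 2) / (2 * A) := by
    have htA : t * A = B := div_mul_cancel₀ B hA.ne'
    rw [add_sub_cancel, inner_sub_right, real_inner_smul_right, htA, sub_self, mul_zero,
      add_zero, ← htA]
    field_simp
    ring
  have hF9 := h t (by positivity) u (v - t • u)
  rw [hlhs, add_sub_cancel] at hF9
  exact ⟨sub_nonpos.1 hF9.1, fun huv => sub_neg.1 (hF9.2 huv)⟩

end SatisfiesF9

end F9

theorem statement12_general (F : EuclideanSpace ℝ (Fin 3) → ℝ) (hF9 : CondF9 F) : CondStar F := by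
  intro u v _ hB
  obtain ⟨hle, hlt⟩ := (condF9_iff_satisfiesF9.1 hF9).sub_le_of_inner_pos hB
  exact ⟨hle, fun hne => hlt fun huv => hne (congrArg F huv)⟩

/-- (cf. Remark 5.4 d)).
If `F : ℝ³ → ℝ` is differentiable, `F(0) = 0`, `|∇F(u)| = o(|u|)` as `u → 0`, and `F`
satisfies (F9) and (**), then `F` satisfies (*). -/
theorem statement12 (F : EuclideanSpace ℝ (Fin 3) → ℝ) (hF : Differentiable ℝ F)
    (hF0 : F 0 = 0) (hsmall : GradLittleO F) (hF9 : CondF9 F) (hss : CondStarStar F) :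
    CondStar F :=
  statement12_general F hF9

end
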